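/- arXiv:1608.02090 — 8 statements merged into one kernel-verified Lean document; each statement's English description precedes it below -/
import Mathlib

section
/- Let P : Sⁿ → Sⁿ be the orthogonal projection (with respect to the trace inner product) onto a subspace S of real symmetric n×n matrices. If P maps the affine set Y + L into itself and the affine set C + L^⊥ into itself (L a linear subspace), then for any X ∈ Y + L, ⟨C, X⟩ = ⟨C, P(X)⟩. -/
open Matrix

section IdempotentSelfAdjoint

variable {ι R : Type*} [Fintype ι] [CommRing R] (P : Matrix ι ι R →ₗ[R] Matrix ι ι R)

theorem trace_apply_mul_sub_apply_eq_zero (hsa : ∀ A B, (P A * B).trace = (A * P B).trace)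
    (hidem : ∀ A, P (P A) = P A) (A X : Matrix ι ι R) : (P A * (X - P X)).trace = 0 := by
  rw [hsa, map_sub, hidem, sub_self, mul_zero, trace_zero]

/-- `X - P X` is orthogonal to the range of `P`, so it is orthogonal to `C` as soon as it is
orthogonal to `P C - C`. -/
theorem trace_mul_sub_apply_eq_zero (hsa : ∀ A B, (P A * B).trace = (A * P B).trace)
    (hidem : ∀ A, P (P A) = P A) {C X : Matrix ι ι R}
    (horth : ((P C - C) * (X - P X)).trace = 0) : (C * (X - P X)).trace = 0 := by
  rw [sub_mul, trace_sub, trace_apply_mul_sub_apply_eq_zero P hsa hidem, zero_sub,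
    neg_eq_zero] at horth
  exact horth

end IdempotentSelfAdjoint

theorem stmt0_general {n : ℕ}
    (L Lp : Submodule ℝ (Matrix (Fin n) (Fin n) ℝ))
    (Y C : Matrix (Fin n) (Fin n) ℝ)
    (hLp : ∀ A, A ∈ Lp ↔ (A.IsSymm ∧ ∀ B ∈ L, (A * B).trace = 0))
    (P : Matrix (Fin n) (Fin n) ℝ →ₗ[ℝ] Matrix (Fin n) (Fin n) ℝ)
    (hsa : ∀ A B, (P A * B).trace = (A * P B).trace)
    (hidem : ∀ A, P (P A) = P A)
    (hprim : ∀ X, X - Y ∈ L → P X - Y ∈ L)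
    (hdual : ∀ Z, Z - C ∈ Lp → P Z - C ∈ Lp) :
    ∀ X, X - Y ∈ L → (C * X).trace = (C * P X).trace := by
  intro X hX
  have hXL : X - P X ∈ L := by simpa using L.sub_mem hX (hprim X hX)
  have hCLp : P C - C ∈ Lp := hdual C (by simp)
  have horth : ((P C - C) * (X - P X)).trace = 0 := ((hLp _).1 hCLp).2 _ hXL
  rw [← sub_eq_zero, ← trace_sub, ← mul_sub]
  exact trace_mul_sub_apply_eq_zero P hsa hidem horth

/-- If the orthogonal projection `P` onto a subspace `S` of real symmetric matrices (with
respect to the trace inner product) maps `Y + L` into itself and `C + L^⊥` into itself,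
then `⟨C, X⟩ = ⟨C, P X⟩` for every `X ∈ Y + L`. -/
theorem stmt0 {n : ℕ}
    (L S Lp : Submodule ℝ (Matrix (Fin n) (Fin n) ℝ))
    (hLsym : ∀ A ∈ L, A.IsSymm) (hSsym : ∀ A ∈ S, A.IsSymm)
    (Y C : Matrix (Fin n) (Fin n) ℝ) (hY : Y.IsSymm) (hC : C.IsSymm)
    (hLp : ∀ A, A ∈ Lp ↔ (A.IsSymm ∧ ∀ B ∈ L, (A * B).trace = 0))
    (P : Matrix (Fin n) (Fin n) ℝ →ₗ[ℝ] Matrix (Fin n) (Fin n) ℝ)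
    (hsa : ∀ A B, (P A * B).trace = (A * P B).trace)
    (hidem : ∀ A, P (P A) = P A)
    (hrange : LinearMap.range P = S)
    (hprim : ∀ X, X - Y ∈ L → P X - Y ∈ L)
    (hdual : ∀ Z, Z - C ∈ Lp → P Z - C ∈ Lp) :
    ∀ X, X - Y ∈ L → (C * X).trace = (C * P X).trace :=
  stmt0_general L Lp Y C hLp P hsa hidem hprim hdual
end

section
/- Let P_L and P_S be the orthogonal projections of an inner product space V onto subspaces L and S respectively. Then L is an invariant subspace of P_S if and only if S is an invariant subspace of P_L. -/
/-!
For a symmetric operator `T`, invariance of `U` under `T` forces invariance of `Uᗮ`, and an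
idempotent commutes with `T` exactly when its range and kernel are `T`-invariant. Hence `U` is
invariant under a symmetric `T` iff `P_U` commutes with `T`, and commutation of `P_L` with `P_S`
is a symmetric relation.
-/

open Module.End

section

variable {𝕜 E : Type*} [RCLike 𝕜] [NormedAddCommGroup E] [InnerProductSpace 𝕜 E]

theorem LinearMap.IsSymmetric.mem_invtSubmodule_iff_commute_starProjection
    {T : Module.End 𝕜 E} (hT : T.IsSymmetric) (U : Submodule 𝕜 E) [U.HasOrthogonalProjection] :
    U ∈ T.invtSubmodule ↔ Commute (U.starProjection : Module.End 𝕜 E) T := by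
  rw [LinearMap.IsIdempotentElem.commute_iff
      (ContinuousLinearMap.IsIdempotentElem.toLinearMap U.isIdempotentElem_starProjection),
    Submodule.range_starProjection, Submodule.ker_starProjection]
  exact ⟨fun h ↦ ⟨h, hT.orthogonalComplement_mem_invtSubmodule h⟩, And.left⟩

theorem Submodule.mem_invtSubmodule_starProjection_comm
    (L S : Submodule 𝕜 E) [L.HasOrthogonalProjection] [S.HasOrthogonalProjection] :
    L ∈ invtSubmodule (S.starProjection : Module.End 𝕜 E) ↔
      S ∈ invtSubmodule (L.starProjection : Module.End 𝕜 E) := by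
  rw [S.starProjection_isSymmetric.mem_invtSubmodule_iff_commute_starProjection,
    L.starProjection_isSymmetric.mem_invtSubmodule_iff_commute_starProjection, Commute.symm_iff]

end

/-- `L` is an invariant subspace of the orthogonal projection onto `S` iff `S` is an
invariant subspace of the orthogonal projection onto `L`. -/
theorem stmt2 {V : Type*} [NormedAddCommGroup V] [InnerProductSpace ℝ V]
    [FiniteDimensional ℝ V] (L S : Submodule ℝ V) :
    (∀ x ∈ L, (Submodule.orthogonalProjection S x : V) ∈ L) ↔
      (∀ x ∈ S, (Submodule.orthogonalProjection L x : V) ∈ S) := by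
  simpa only [mem_invtSubmodule_iff_forall_mem_of_mem, ContinuousLinearMap.coe_coe,
    Submodule.starProjection_apply] using L.mem_invtSubmodule_starProjection_comm S
end

section
/- Let S ⊆ Sⁿ be a linear subspace invariant under squaring (X ∈ S implies X² ∈ S). Then the orthogonal projection P_S onto S (with respect to the trace inner product) is a positive map: if X is positive semidefinite, then P_S(X) is positive semidefinite. -/
/-!
Put `Y = P X`. Closure of `S` under squaring gives closure under Jordan products, hence under
positive powers and under polynomials without constant term. Since `Y` has finite spectrum, every
`f(Y)` with `f 0 = 0` is such a polynomial in `Y`; in particular the negative part `Y⁻` lies in `S`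
and is fixed by `P`. Self-adjointness of `P` gives `tr (Y Y⁻) = tr (X Y⁻) ≥ 0`, whereas
`Y Y⁻ = -(Y⁻)²`. Hence `tr ((Y⁻)²) = 0`, so `Y⁻ = 0` and `Y ⪰ 0`.
-/

open Matrix Polynomial
open scoped MatrixOrder ComplexOrder

namespace Submodule

section
variable {R A : Type*} [Ring R] [Ring A] [Module R A] {S : Submodule R A}

theorem mul_add_mul_mem_of_mul_self_mem (hS : ∀ x ∈ S, x * x ∈ S) {a b : A}
    (ha : a ∈ S) (hb : b ∈ S) : a * b + b * a ∈ S := by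
  have key : a * b + b * a = (a + b) * (a + b) - a * a - b * b := by noncomm_ring
  rw [key]
  exact sub_mem (sub_mem (hS _ (add_mem ha hb)) (hS a ha)) (hS b hb)

theorem pow_succ_mem_of_mul_self_mem [Invertible (2 : R)] (hS : ∀ x ∈ S, x * x ∈ S) {a : A}
    (ha : a ∈ S) (k : ℕ) : a ^ (k + 1) ∈ S := by
  induction k with
  | zero => simpa using ha
  | succ k ih =>
    have hsum : a ^ (k + 2) + a ^ (k + 2) ∈ S := by
      simpa only [← pow_succ, ← pow_succ'] using mul_add_mul_mem_of_mul_self_mem hS ih ha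
    have key : a ^ (k + 2) = (⅟2 : R) • (a ^ (k + 2) + a ^ (k + 2)) := by
      rw [← two_smul R, smul_smul, invOf_mul_self, one_smul]
    rw [key]
    exact smul_mem S _ hsum

end

theorem aeval_mem_of_mul_self_mem {R A : Type*} [CommRing R] [Invertible (2 : R)] [Ring A]
    [Algebra R A] {S : Submodule R A} (hS : ∀ x ∈ S, x * x ∈ S) {a : A} (ha : a ∈ S)
    {q : R[X]} (hq : q.coeff 0 = 0) : aeval a q ∈ S := by
  rw [aeval_eq_sum_range]
  refine sum_mem fun k _ => ?_
  cases k with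
  | zero => simp [hq]
  | succ k => exact smul_mem S _ (pow_succ_mem_of_mul_self_mem hS ha k)

theorem cfc_mem_of_mul_self_mem {𝕜 A : Type*} {p : A → Prop} [Field 𝕜] [Invertible (2 : 𝕜)]
    [StarRing 𝕜] [MetricSpace 𝕜] [IsTopologicalSemiring 𝕜] [ContinuousStar 𝕜]
    [TopologicalSpace A] [Ring A] [StarRing A] [Algebra 𝕜 A] [ContinuousFunctionalCalculus 𝕜 A p]
    {S : Submodule 𝕜 A} (hS : ∀ x ∈ S, x * x ∈ S) {a : A} (ha : a ∈ S)
    (hσ : (spectrum 𝕜 a).Finite) {f : 𝕜 → 𝕜} (hf0 : f 0 = 0) : cfc f a ∈ S := by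
  by_cases hpa : p a
  · classical
    -- Interpolating `f` on the spectrum and at `0` gives a polynomial without constant term.
    set nodes := insert 0 hσ.toFinset
    have hq : ∀ x ∈ nodes, (Lagrange.interpolate nodes id f).eval x = f x :=
      fun x hx => Lagrange.eval_interpolate_at_node (v := id) f (Set.injOn_id _) hx
    have hcfc : cfc f a = aeval a (Lagrange.interpolate nodes id f) := by
      rw [← cfc_polynomial _ a]
      exact cfc_congr fun x hx => (hq x (Finset.mem_insert_of_mem (hσ.mem_toFinset.mpr hx))).symm
    rw [hcfc]
    refine aeval_mem_of_mul_self_mem hS ha ?_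
    rw [coeff_zero_eq_eval_zero, hq 0 (Finset.mem_insert_self _ _), hf0]
  · rw [cfc_apply_of_not_predicate a hpa]
    exact S.zero_mem

end Submodule

namespace Matrix

variable {n 𝕜 : Type*} [Fintype n] [DecidableEq n] [RCLike 𝕜]

theorem PosSemidef.trace_mul_nonneg {A B : Matrix n n 𝕜} (hA : A.PosSemidef)
    (hB : B.PosSemidef) : 0 ≤ (A * B).trace := by
  have hsqrt : (CFC.sqrt B)ᴴ = CFC.sqrt B := (CFC.sqrt_nonneg B).isSelfAdjoint
  have key : (A * B).trace = (CFC.sqrt B * A * (CFC.sqrt B)ᴴ).trace := by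
    conv_lhs => rw [← CFC.sqrt_mul_sqrt_self B hB.nonneg, ← Matrix.mul_assoc]
    rw [hsqrt, trace_mul_cycle]
  rw [key]
  exact (hA.mul_mul_conjTranspose_same _).trace_nonneg

theorem nonneg_of_trace_mul_negPart_nonneg {A : Matrix n n 𝕜} (hA : IsSelfAdjoint A)
    (h : 0 ≤ (A * A⁻).trace) : 0 ≤ A := by
  have hneg : (A⁻)ᴴ = A⁻ := (CFC.negPart_nonneg A).isSelfAdjoint
  have key : A * A⁻ = -((A⁻)ᴴ * A⁻) := by
    nth_rw 1 [← CFC.posPart_sub_negPart A hA]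
    rw [sub_mul, CFC.posPart_mul_negPart, zero_sub, hneg]
  have htrace : ((A⁻)ᴴ * A⁻).trace = 0 :=
    le_antisymm (by simpa [key] using h) (posSemidef_conjTranspose_mul_self _).trace_nonneg
  rw [← CFC.negPart_eq_zero_iff A hA]
  exact trace_conjTranspose_mul_self_eq_zero_iff.mp htrace

end Matrix

/-- If a subspace `S` of real symmetric matrices is invariant under squaring, then the
orthogonal projection onto `S` (w.r.t. the trace inner product) is a positive map. -/
theorem stmt5 {n : ℕ} (S : Submodule ℝ (Matrix (Fin n) (Fin n) ℝ))
    (hSsym : ∀ A ∈ S, A.IsSymm)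
    (hsq : ∀ X ∈ S, X * X ∈ S)
    (P : Matrix (Fin n) (Fin n) ℝ →ₗ[ℝ] Matrix (Fin n) (Fin n) ℝ)
    (hsa : ∀ A B, (P A * B).trace = (A * P B).trace)
    (hidem : ∀ A, P (P A) = P A)
    (hrange : LinearMap.range P = S) :
    ∀ X : Matrix (Fin n) (Fin n) ℝ, X.PosSemidef → (P X).PosSemidef := by
  intro X hX
  have hPS : P X ∈ S := hrange ▸ LinearMap.mem_range_self P X
  have hPfix : ∀ A ∈ S, P A = A := by
    rintro A hA
    obtain ⟨B, rfl⟩ := hrange ▸ hA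
    exact hidem B
  have hPX : IsSelfAdjoint (P X) := by
    rw [IsSelfAdjoint, star_eq_conjTranspose, conjTranspose_eq_transpose_of_trivial]
    exact hSsym _ hPS
  have hneg : (P X)⁻ ∈ S := by
    rw [CFC.negPart_def, cfcₙ_eq_cfc]
    exact S.cfc_mem_of_mul_self_mem hsq hPS (P X).finite_spectrum (by simp)
  rw [← nonneg_iff_posSemidef]
  refine nonneg_of_trace_mul_negPart_nonneg hPX ?_
  calc 0 ≤ (X * (P X)⁻).trace := hX.trace_mul_nonneg (CFC.negPart_nonneg _).posSemidef
    _ = (P X * (P X)⁻).trace := by rw [hsa, hPfix _ hneg]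
end

section
/- Let P : Sʳ → Sʳ be an orthogonal projection (with respect to the trace inner product) that is positive (maps psd matrices to psd matrices) and satisfies P(I) = I. Then the range of P is invariant under squaring: for every X in the range of P, X² is in the range of P. -/
/-!
Write a Hermitian `X` as `∑ λᵢ Eᵢ` with rank-one projections `Eᵢ`, and put `Fᵢ = P Eᵢ`: these are
positive semidefinite and sum to `P 1 = 1`, so
`P (X²) - (P X)² = ∑ (P X - λᵢ) Fᵢ (P X - λᵢ) ⪰ 0` (Kadison's inequality).
If moreover `P X = X`, self-adjointness of `P` gives `tr P (X²) = tr (X² P 1) = tr X²`, so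
`P (X²) - X²` is positive semidefinite with zero trace, hence zero.
-/

open Matrix Unitary
open scoped ComplexOrder

namespace Matrix

variable {n ι 𝕜 : Type*} [Fintype n] [DecidableEq n] [Fintype ι] [RCLike 𝕜]

theorem posSemidef_sum_sq_smul_sub_mul_self {F : ι → Matrix n n 𝕜}
    (hF : ∀ i, (F i).PosSemidef) (hsum : ∑ i, F i = 1) (c : ι → ℝ) :
    (∑ i, c i ^ 2 • F i - (∑ i, c i • F i) * ∑ i, c i • F i).PosSemidef := by
  set Y := ∑ i, c i • F i
  have hY : Yᴴ = Y := by
    simp only [Y, conjTranspose_sum, conjTranspose_smul, star_trivial, (hF _).1.eq]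
  have hterm : ∀ i, (Y - c i • 1) * F i * (Y - c i • 1)ᴴ
      = Y * F i * Y - c i • (Y * F i) - c i • (F i * Y) + c i ^ 2 • F i := by
    intro i
    simp only [conjTranspose_sub, conjTranspose_smul, conjTranspose_one, star_trivial, hY,
      sub_mul, mul_sub, Matrix.smul_mul, Matrix.mul_smul, smul_smul, Matrix.one_mul,
      Matrix.mul_one, sq]
    abel
  have hleft : ∑ i, c i • (Y * F i) = Y * Y := by
    simp only [Y, Finset.mul_sum, Matrix.mul_smul]
  have hright : ∑ i, c i • (F i * Y) = Y * Y := by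
    simp only [Y, Finset.sum_mul, Matrix.smul_mul]
  have hdecomp : ∑ i, c i ^ 2 • F i - Y * Y = ∑ i, (Y - c i • 1) * F i * (Y - c i • 1)ᴴ := by
    simp only [hterm, Finset.sum_add_distrib, Finset.sum_sub_distrib, ← Finset.mul_sum,
      ← Finset.sum_mul, hsum, Matrix.mul_one, hleft, hright]
    abel
  rw [hdecomp]
  exact posSemidef_sum _ fun i _ => (hF i).mul_mul_conjTranspose_same _

namespace IsHermitian

variable {A : Matrix n n 𝕜}

noncomputable def eigenprojection (hA : A.IsHermitian) (i : n) : Matrix n n 𝕜 :=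
  conjStarAlgAut 𝕜 _ hA.eigenvectorUnitary (single i i 1)

theorem posSemidef_eigenprojection (hA : A.IsHermitian) (i : n) :
    (hA.eigenprojection i).PosSemidef := by
  rw [eigenprojection, conjStarAlgAut_apply, ← diagonal_single, star_eq_conjTranspose]
  exact (posSemidef_diagonal_iff.mpr fun j => by
    rcases eq_or_ne j i with rfl | h <;> simp [*]).mul_mul_conjTranspose_same _

theorem conjStarAlgAut_diagonal_ofReal (hA : A.IsHermitian) (d : n → ℝ) :
    conjStarAlgAut 𝕜 _ hA.eigenvectorUnitary (diagonal (RCLike.ofReal ∘ d)) =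
      ∑ i, d i • hA.eigenprojection i := by
  simp only [← sum_single_eq_diagonal, map_sum, eigenprojection, ← map_smul,
    RCLike.real_smul_eq_coe_smul (K := 𝕜), smul_single, smul_eq_mul, mul_one, Function.comp_apply]

theorem sum_eigenprojection (hA : A.IsHermitian) : ∑ i, hA.eigenprojection i = 1 := by
  simp only [eigenprojection, ← map_sum, sum_single_one, map_one]

theorem sum_eigenvalues_smul_eigenprojection (hA : A.IsHermitian) :
    ∑ i, hA.eigenvalues i • hA.eigenprojection i = A := by
  rw [← conjStarAlgAut_diagonal_ofReal, ← hA.spectral_theorem]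

theorem sum_sq_eigenvalues_smul_eigenprojection (hA : A.IsHermitian) :
    ∑ i, hA.eigenvalues i ^ 2 • hA.eigenprojection i = A * A := by
  conv_rhs => rw [hA.spectral_theorem, ← map_mul, diagonal_mul_diagonal]
  rw [← conjStarAlgAut_diagonal_ofReal]
  congr 2
  ext i
  simp [sq]

theorem posSemidef_map_mul_self_sub {m : Type*} [Fintype m] [DecidableEq m]
    (hA : A.IsHermitian) (P : Matrix n n 𝕜 →ₗ[𝕜] Matrix m m 𝕜)
    (hpos : ∀ B, B.PosSemidef → (P B).PosSemidef) (hP1 : P 1 = 1) :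
    (P (A * A) - P A * P A).PosSemidef := by
  have hsum : ∑ i, P (hA.eigenprojection i) = 1 := by
    rw [← map_sum, sum_eigenprojection, hP1]
  have hmap : ∀ c : n → ℝ, P (∑ i, c i • hA.eigenprojection i) =
      ∑ i, c i • P (hA.eigenprojection i) := fun c => by
    simp only [map_sum, LinearMap.map_smul_of_tower]
  have := posSemidef_sum_sq_smul_sub_mul_self
    (fun i => hpos _ (hA.posSemidef_eigenprojection i)) hsum hA.eigenvalues
  rwa [← hmap, ← hmap, hA.sum_sq_eigenvalues_smul_eigenprojection,
    hA.sum_eigenvalues_smul_eigenprojection] at this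

end IsHermitian

end Matrix

theorem stmt7_general {r : ℕ}
    (P : Matrix (Fin r) (Fin r) ℝ →ₗ[ℝ] Matrix (Fin r) (Fin r) ℝ)
    (hsa : ∀ A B : Matrix (Fin r) (Fin r) ℝ, A.IsSymm → B.IsSymm →
      (P A * B).trace = (A * P B).trace)
    (hpos : ∀ A : Matrix (Fin r) (Fin r) ℝ, A.PosSemidef → (P A).PosSemidef)
    (hP1 : P 1 = 1) :
    ∀ X : Matrix (Fin r) (Fin r) ℝ, X.IsSymm → P X = X → P (X * X) = X * X := by
  intro X hX hPX
  have hkadison : (P (X * X) - X * X).PosSemidef := by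
    simpa only [hPX] using (isHermitian_iff_isSymm.mpr hX).posSemidef_map_mul_self_sub P hpos hP1
  have htrace : (P (X * X) - X * X).trace = 0 := by
    have hXX : (X * X).IsSymm := by rw [IsSymm, transpose_mul, hX.eq]
    have := hsa (X * X) 1 hXX isSymm_one
    rw [mul_one, hP1, mul_one] at this
    rw [trace_sub, this, sub_self]
  exact sub_eq_zero.mp (hkadison.trace_eq_zero_iff.mp htrace)

/-- If `P : Sʳ → Sʳ` is an orthogonal projection (w.r.t. the trace inner product) that is
positive and unital (`P I = I`), then its range is invariant under squaring. -/
theorem stmt7 {r : ℕ}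
    (P : Matrix (Fin r) (Fin r) ℝ →ₗ[ℝ] Matrix (Fin r) (Fin r) ℝ)
    (hsymP : ∀ A : Matrix (Fin r) (Fin r) ℝ, A.IsSymm → (P A).IsSymm)
    (hsa : ∀ A B : Matrix (Fin r) (Fin r) ℝ, A.IsSymm → B.IsSymm →
      (P A * B).trace = (A * P B).trace)
    (hidem : ∀ A : Matrix (Fin r) (Fin r) ℝ, A.IsSymm → P (P A) = P A)
    (hpos : ∀ A : Matrix (Fin r) (Fin r) ℝ, A.PosSemidef → (P A).PosSemidef)
    (hP1 : P 1 = 1) :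
    ∀ X : Matrix (Fin r) (Fin r) ℝ, X.IsSymm → P X = X → P (X * X) = X * X :=
  stmt7_general P hsa hpos hP1
end

section
/- Let V and W be finite-dimensional real inner product spaces, C ⊆ V and K ⊆ W self-dual closed convex cones, and T : V → W an injective linear map with adjoint T*. If T(C) = K, then T*T(C) = C. -/
/-!
Write `s^*` for the inner dual cone of a set `s`. Since `⟪T x, y⟫ = ⟪x, T* y⟫`, the dual of an
image is a preimage: `(T '' s)^* = T* ⁻¹' s^*`. Self-duality of `K = T(C)` and of `C` therefore
gives `K = T* ⁻¹' C`, so `T*T(C) = T*(K) = T*(T* ⁻¹' C) = C`, the last step because `T*` is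
surjective when `T` is injective.
-/

open Function

namespace LinearMap

variable {𝕜 E F : Type*} [RCLike 𝕜] [NormedAddCommGroup E] [InnerProductSpace 𝕜 E]
  [FiniteDimensional 𝕜 E] [NormedAddCommGroup F] [InnerProductSpace 𝕜 F] [FiniteDimensional 𝕜 F]

theorem adjoint_surjective {T : E →ₗ[𝕜] F} (hT : Injective T) : Surjective T.adjoint := by
  rw [← range_eq_top, ← orthogonal_ker, ker_eq_bot.mpr hT, Submodule.bot_orthogonal_eq_top]

end LinearMap

namespace ProperCone

theorem coe_innerDual_image {V W : Type*} [NormedAddCommGroup V] [InnerProductSpace ℝ V]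
    [FiniteDimensional ℝ V] [NormedAddCommGroup W] [InnerProductSpace ℝ W]
    [FiniteDimensional ℝ W] (T : V →ₗ[ℝ] W) (s : Set V) :
    (innerDual (T '' s) : Set W) = T.adjoint ⁻¹' innerDual s := by
  ext y
  simp [LinearMap.adjoint_inner_right]

end ProperCone

/-- If `T` is an injective linear map between finite-dimensional real inner product
spaces mapping a self-dual cone `C` onto a self-dual cone `K`, then `T*T(C) = C`. -/
theorem stmt11 {V W : Type*} [NormedAddCommGroup V] [InnerProductSpace ℝ V]
    [FiniteDimensional ℝ V] [NormedAddCommGroup W] [InnerProductSpace ℝ W]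
    [FiniteDimensional ℝ W]
    (C : Set V) (K : Set W)
    (hC : C = {y : V | ∀ x ∈ C, 0 ≤ (inner ℝ x y : ℝ)})
    (hK : K = {y : W | ∀ x ∈ K, 0 ≤ (inner ℝ x y : ℝ)})
    (T : V →ₗ[ℝ] W) (hT : Function.Injective T)
    (hTC : T '' C = K) :
    (LinearMap.adjoint T ∘ₗ T) '' C = C := by
  have hK_preimage : K = LinearMap.adjoint T ⁻¹' C :=
    calc K = ProperCone.innerDual K := hK
      _ = ProperCone.innerDual (T '' C) := by rw [hTC]
      _ = LinearMap.adjoint T ⁻¹' ProperCone.innerDual C := ProperCone.coe_innerDual_image T C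
      _ = LinearMap.adjoint T ⁻¹' C := congrArg _ hC.symm
  rw [LinearMap.coe_comp, Set.image_comp, hTC, hK_preimage]
  exact Set.image_preimage_eq C (LinearMap.adjoint_surjective hT)
end

section
/- Let R ⊆ [n] × [n] be a symmetric relation and let S be the span of {E_{ij} + E_{ji} : (i,j) ∈ R} in Sⁿ. Then S is invariant under squaring (X² ∈ S for all X ∈ S) if and only if R is transitive. -/
open Matrix

/-!
Once `2` is invertible, the span of the `E_ij + E_ji` with `(i,j) ∈ R` is exactly the space of
symmetric matrices vanishing off `R`, since such an `X` equals `∑ (X_ij / 2) (E_ij + E_ji)`.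
If `R` is transitive, no term of `(X²)_ik = ∑_j X_ij X_jk` survives when `(i,k) ∉ R`. Conversely,
for `(i,j), (j,k) ∈ R` the nonnegative matrix `X = (E_ij + E_ji) + (E_jk + E_kj)` has
`(X²)_ik ≥ X_ij X_jk ≥ 1`, which forces `(i,k) ∈ R`.
-/

namespace Matrix

variable {ι K : Type*}

theorem mul_apply_le_mul_apply [Fintype ι] [Semiring K] [PartialOrder K] [IsOrderedRing K]
    {A B : Matrix ι ι K} (hA : ∀ i j, 0 ≤ A i j) (hB : ∀ i j, 0 ≤ B i j) (i j k : ι) :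
    A i j * B j k ≤ (A * B) i k :=
  Finset.single_le_sum (fun m _ => mul_nonneg (hA i m) (hB m k)) (Finset.mem_univ j)

variable [DecidableEq ι]

theorem single_apply_nonneg [Zero K] [Preorder K] {c : K} (hc : 0 ≤ c) (i j a b : ι) :
    0 ≤ single i j c a b := by
  rw [single_apply]
  exact ite_nonneg hc le_rfl

section Semiring

variable [Semiring K]

def symmSingle (i j : ι) : Matrix ι ι K := single i j 1 + single j i 1

theorem isSymm_symmSingle (i j : ι) : (symmSingle i j : Matrix ι ι K).IsSymm := by
  simp [symmSingle, IsSymm, transpose_single, add_comm]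

variable (K) in
def symmSupportedOn (R : ι → ι → Prop) : Submodule K (Matrix ι ι K) where
  carrier := {X | X.IsSymm ∧ ∀ i j, ¬ R i j → X i j = 0}
  add_mem' := fun ⟨hA, hA'⟩ ⟨hB, hB'⟩ =>
    ⟨hA.add hB, fun i j h => by rw [add_apply, hA' i j h, hB' i j h, add_zero]⟩
  zero_mem' := ⟨isSymm_zero, fun _ _ _ => rfl⟩
  smul_mem' c _ := fun ⟨hA, hA'⟩ =>
    ⟨hA.smul c, fun i j h => by rw [smul_apply, hA' i j h, smul_zero]⟩

theorem symmSingle_mem_symmSupportedOn {R : ι → ι → Prop} (hR : ∀ i j, R i j → R j i)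
    {i j : ι} (hij : R i j) : symmSingle i j ∈ symmSupportedOn K R := by
  refine ⟨isSymm_symmSingle i j, fun a b hab => ?_⟩
  have hba : ¬ R b a := fun h => hab (hR b a h)
  simp only [symmSingle, add_apply, single_apply]
  grind

theorem span_symmSingle_le_symmSupportedOn {R : ι → ι → Prop} (hR : ∀ i j, R i j → R j i) :
    Submodule.span K {A | ∃ i j, R i j ∧ A = symmSingle i j} ≤ symmSupportedOn K R :=
  Submodule.span_le.2 fun _ ⟨_, _, hij, hA⟩ => hA ▸ symmSingle_mem_symmSupportedOn hR hij

end Semiring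

section OrderedSemiring

variable [Semiring K] [PartialOrder K] [IsOrderedRing K]

theorem symmSingle_apply_nonneg (i j a b : ι) : 0 ≤ (symmSingle i j : Matrix ι ι K) a b :=
  add_nonneg (single_apply_nonneg zero_le_one i j a b) (single_apply_nonneg zero_le_one j i a b)

theorem one_le_symmSingle_apply_self (i j : ι) : 1 ≤ (symmSingle i j : Matrix ι ι K) i j := by
  rw [symmSingle, add_apply, single_apply_same]
  exact le_add_of_nonneg_right (single_apply_nonneg zero_le_one j i i j)

end OrderedSemiring

variable [Fintype ι]

theorem eq_sum_symmSingle [CommRing K] [Invertible (2 : K)] {X : Matrix ι ι K} (hX : X.IsSymm) :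
    X = ∑ i, ∑ j, (⅟2 * X i j) • symmSingle i j :=
  calc X = (⅟2 : K) • (X + Xᵀ) := by
        rw [hX.eq, ← two_smul K X, smul_smul, invOf_mul_self, one_smul]
    _ = (⅟2 : K) • (∑ i, ∑ j, single i j (X i j) + (∑ i, ∑ j, single i j (X i j))ᵀ) := by
        rw [← matrix_eq_sum_single]
    _ = _ := by
        simp only [symmSingle, transpose_sum, transpose_single, ← Finset.sum_add_distrib,
          Finset.smul_sum, smul_add, mul_smul, smul_single, smul_eq_mul, mul_one]

theorem symmSupportedOn_le_span_symmSingle [CommRing K] [Invertible (2 : K)] (R : ι → ι → Prop) :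
    symmSupportedOn K R ≤ Submodule.span K {A | ∃ i j, R i j ∧ A = symmSingle i j} := by
  rintro X ⟨hX, hXR⟩
  rw [eq_sum_symmSingle hX]
  refine Submodule.sum_mem _ fun i _ => Submodule.sum_mem _ fun j _ => ?_
  by_cases h : R i j
  · exact Submodule.smul_mem _ _ (Submodule.subset_span ⟨i, j, h, rfl⟩)
  · simp [hXR i j h]

theorem span_symmSingle_eq_symmSupportedOn [CommRing K] [Invertible (2 : K)]
    {R : ι → ι → Prop} (hR : ∀ i j, R i j → R j i) :
    Submodule.span K {A | ∃ i j, R i j ∧ A = symmSingle i j} = symmSupportedOn K R :=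
  (span_symmSingle_le_symmSupportedOn hR).antisymm (symmSupportedOn_le_span_symmSingle R)

theorem mul_self_mem_symmSupportedOn [CommSemiring K] {R : ι → ι → Prop}
    (hR : ∀ i j k, R i j → R j k → R i k) {X : Matrix ι ι K} (hX : X ∈ symmSupportedOn K R) :
    X * X ∈ symmSupportedOn K R := by
  obtain ⟨hXs, hXR⟩ := hX
  refine ⟨by simpa [sq] using hXs.pow 2, fun i k hik => ?_⟩
  rw [mul_apply]
  refine Finset.sum_eq_zero fun j _ => ?_
  by_cases hij : R i j
  · rw [hXR j k fun hjk => hik (hR i j k hij hjk), mul_zero]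
  · rw [hXR i j hij, zero_mul]

theorem rel_of_mul_self_mem_symmSupportedOn [Semiring K] [PartialOrder K] [IsOrderedRing K]
    [Nontrivial K] {R : ι → ι → Prop} {i j k : ι}
    (hsq : (symmSingle i j + symmSingle j k) * (symmSingle i j + symmSingle j k) ∈
      symmSupportedOn K R) : R i k := by
  set X : Matrix ι ι K := symmSingle i j + symmSingle j k
  have hX_nonneg : ∀ a b, 0 ≤ X a b := fun a b =>
    add_nonneg (symmSingle_apply_nonneg i j a b) (symmSingle_apply_nonneg j k a b)
  have hXij : 1 ≤ X i j :=
    le_add_of_le_of_nonneg (one_le_symmSingle_apply_self i j) (symmSingle_apply_nonneg j k i j)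
  have hXjk : 1 ≤ X j k :=
    le_add_of_nonneg_of_le (symmSingle_apply_nonneg i j j k) (one_le_symmSingle_apply_self j k)
  have hpos : (0 : K) < (X * X) i k :=
    calc (0 : K) < 1 * 1 := by simp
      _ ≤ X i j * X j k := mul_le_mul hXij hXjk zero_le_one (hX_nonneg i j)
      _ ≤ (X * X) i k := mul_apply_le_mul_apply hX_nonneg hX_nonneg i j k
  by_contra hik
  exact hpos.ne' (hsq.2 i k hik)

end Matrix

/-- For a symmetric relation `R` on `[n]`, the coordinate subspace spanned by
`{E_{ij} + E_{ji} : (i,j) ∈ R}` is invariant under squaring iff `R` is transitive. -/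
theorem stmt15 {n : ℕ} (R : Fin n → Fin n → Prop)
    (hsymm : ∀ i j, R i j → R j i) :
    (∀ X ∈ Submodule.span ℝ
        {A : Matrix (Fin n) (Fin n) ℝ | ∃ i j, R i j ∧
          A = Matrix.single i j 1 + Matrix.single j i 1},
      X * X ∈ Submodule.span ℝ
        {A : Matrix (Fin n) (Fin n) ℝ | ∃ i j, R i j ∧
          A = Matrix.single i j 1 + Matrix.single j i 1}) ↔
    (∀ i j k, R i j → R j k → R i k) := by
  change (∀ X ∈ Submodule.span ℝ {A | ∃ i j, R i j ∧ A = symmSingle i j},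
    X * X ∈ Submodule.span ℝ {A | ∃ i j, R i j ∧ A = symmSingle i j}) ↔ _
  rw [span_symmSingle_eq_symmSupportedOn hsymm]
  refine ⟨fun hsq i j k hij hjk => ?_, fun htrans X hX => mul_self_mem_symmSupportedOn htrans hX⟩
  exact rel_of_mul_self_mem_symmSupportedOn (hsq _ (add_mem
    (symmSingle_mem_symmSupportedOn hsymm hij) (symmSingle_mem_symmSupportedOn hsymm hjk)))
end

section
/- Let B be an orthogonal basis of Sⁿ and T : Sⁿ → Sⁿ a self-adjoint linear map. Form the graph G on vertex set B with an edge {A,B} whenever ⟨A, T(B)⟩ ≠ 0, and let B₁, …, B_p be the vertex sets of the connected components of G. For a subset P ⊆ B, the span of P is an invariant subspace of T if and only if P is a union of some of the sets B_k. -/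
/-!
Write `c i j = ⟨B i, T (B j)⟩`; self-adjointness makes `c` symmetric. Since the `B i` form an
orthogonal basis of nonzero symmetric matrices, the coefficient of `T (B j)` on `B i` is
`c i j / ⟨B i, B i⟩`, so `T (B j) ∈ span (B '' P)` iff `c i j = 0` for all `i ∉ P`. Hence
`span (B '' P)` is `T`-invariant iff no edge of the graph leaves `P`, i.e. iff `P` is closed
under adjacency, equivalently under reachability.
-/

open Matrix

theorem Matrix.IsSymm.trace_mul_self_ne_zero {m : Type*} [Fintype m] {A : Matrix m m ℝ}
    (hA : A.IsSymm) (h : A ≠ 0) : (A * A).trace ≠ 0 := by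
  have h0 := trace_conjTranspose_mul_self_eq_zero_iff (A := A)
  rw [conjTranspose_eq_transpose_of_trivial, hA.eq] at h0
  exact mt h0.mp h

theorem Matrix.trace_mul_eq_zero_of_mem_span {m R : Type*} [Fintype m] [CommSemiring R]
    {C X : Matrix m m R} {s : Set (Matrix m m R)} (hs : ∀ A ∈ s, (C * A).trace = 0)
    (hX : X ∈ Submodule.span R s) : (C * X).trace = 0 :=
  Submodule.span_le
    (p := LinearMap.ker ((traceLinearMap m R R).comp (LinearMap.mulLeft R C))) |>.mpr hs hX

theorem Matrix.trace_mul_sum_smul_of_orthogonal {m ι K : Type*} [Fintype m] [Fintype ι]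
    [CommSemiring K] {B : ι → Matrix m m K} (horth : ∀ i j, i ≠ j → (B i * B j).trace = 0)
    (a : ι → K) (j : ι) :
    (B j * ∑ i, a i • B i).trace = a j * (B j * B j).trace := by
  rw [Finset.mul_sum, trace_sum, Finset.sum_eq_single j (fun i _ hij => by
    rw [Matrix.mul_smul, trace_smul, horth j i (Ne.symm hij), smul_zero]) (by simp),
    Matrix.mul_smul, trace_smul, smul_eq_mul]

theorem SimpleGraph.forall_reachable_mem_iff_forall_adj_mem {V : Type*} (G : SimpleGraph V)
    (P : Set V) :
    (∀ i ∈ P, ∀ j, G.Reachable i j → j ∈ P) ↔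
      ∀ i ∈ P, ∀ j, G.Adj i j → j ∈ P := by
  refine ⟨fun h i hi j hij => h i hi j hij.reachable, fun h i hi j hij => ?_⟩
  rw [reachable_iff_reflTransGen] at hij
  induction hij with
  | refl => exact hi
  | tail _ hadj ih => exact h _ ih _ hadj

theorem Submodule.forall_mem_span_map_mem_iff {R M : Type*} [Semiring R] [AddCommMonoid M]
    [Module R M] (f : M →ₗ[R] M) (s : Set M) :
    (∀ x ∈ span R s, f x ∈ span R s) ↔ ∀ x ∈ s, f x ∈ span R s :=
  span_le (p := (span R s).comap f)

theorem Matrix.mem_span_image_iff_forall_trace_mul_eq_zero {m ι K : Type*} [Fintype m]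
    [Fintype ι] [CommSemiring K] [NoZeroDivisors K] {B : ι → Matrix m m K}
    (horth : ∀ i j, i ≠ j → (B i * B j).trace = 0) (hself : ∀ i, (B i * B i).trace ≠ 0)
    (P : Set ι) {X : Matrix m m K} (hX : X ∈ Submodule.span K (Set.range B)) :
    X ∈ Submodule.span K (B '' P) ↔ ∀ j ∉ P, (B j * X).trace = 0 := by
  refine ⟨fun h j hj => trace_mul_eq_zero_of_mem_span ?_ h, fun h => ?_⟩
  · rintro _ ⟨i, hi, rfl⟩
    exact horth j i (ne_of_mem_of_not_mem hi hj).symm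
  obtain ⟨a, rfl⟩ := (Submodule.mem_span_range_iff_exists_fun K).mp hX
  refine Submodule.sum_mem _ fun i _ => ?_
  by_cases hi : i ∈ P
  · exact Submodule.smul_mem _ _ (Submodule.subset_span ⟨i, hi, rfl⟩)
  have hai : a i = 0 := by
    have h0 := h i hi
    rw [trace_mul_sum_smul_of_orthogonal horth] at h0
    exact (mul_eq_zero.mp h0).resolve_right (hself i)
  rw [hai, zero_smul]
  exact Submodule.zero_mem _

theorem stmt16_general {n : ℕ} {ι : Type*} [Fintype ι]
    (B : ι → Matrix (Fin n) (Fin n) ℝ)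
    (hBsym : ∀ i, (B i).IsSymm) (hBne : ∀ i, B i ≠ 0)
    (horth : ∀ i j, i ≠ j → (B i * B j).trace = 0)
    (hspan : ∀ A : Matrix (Fin n) (Fin n) ℝ, A.IsSymm →
      A ∈ Submodule.span ℝ (Set.range B))
    (T : Matrix (Fin n) (Fin n) ℝ →ₗ[ℝ] Matrix (Fin n) (Fin n) ℝ)
    (hTsym : ∀ A : Matrix (Fin n) (Fin n) ℝ, A.IsSymm → (T A).IsSymm)
    (hsa : ∀ A C : Matrix (Fin n) (Fin n) ℝ, A.IsSymm → C.IsSymm →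
      (T A * C).trace = (A * T C).trace)
    (P : Set ι) :
    (∀ A ∈ Submodule.span ℝ (B '' P), T A ∈ Submodule.span ℝ (B '' P)) ↔
      ∀ i ∈ P, ∀ j,
        (SimpleGraph.fromRel fun a b => (B a * T (B b)).trace ≠ 0).Reachable i j →
          j ∈ P := by
  have hcomm : ∀ i j, (B i * T (B j)).trace = (B j * T (B i)).trace := fun i j => by
    rw [← hsa _ _ (hBsym i) (hBsym j), trace_mul_comm]
  have hTB : ∀ i,
      T (B i) ∈ Submodule.span ℝ (B '' P) ↔ ∀ j ∉ P, (B j * T (B i)).trace = 0 := fun i =>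
    mem_span_image_iff_forall_trace_mul_eq_zero horth
      (fun j => (hBsym j).trace_mul_self_ne_zero (hBne j)) P (hspan _ (hTsym _ (hBsym i)))
  rw [Submodule.forall_mem_span_map_mem_iff,
    SimpleGraph.forall_reachable_mem_iff_forall_adj_mem]
  simp only [Set.forall_mem_image, hTB, SimpleGraph.fromRel_adj]
  constructor
  · rintro h i hi j ⟨-, hij⟩
    by_contra hj
    rw [hcomm, or_self] at hij
    exact hij (h hi j hj)
  · intro h i hi j hj
    by_contra hij
    exact hj (h i hi j ⟨ne_of_mem_of_not_mem hi hj, Or.inr hij⟩)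

/-- Let `B` be an orthogonal basis of the symmetric matrices and `T` a self-adjoint
linear map (w.r.t. the trace inner product). Form the graph on the basis with an edge
`{Bᵢ, Bⱼ}` whenever `⟨Bᵢ, T Bⱼ⟩ ≠ 0`. Then for `P ⊆ ι`, the span of `{Bᵢ : i ∈ P}` is an
invariant subspace of `T` iff `P` is a union of connected components of the graph, i.e.
`P` is closed under reachability. -/
theorem stmt16 {n : ℕ} {ι : Type*} [Fintype ι] [DecidableEq ι]
    (B : ι → Matrix (Fin n) (Fin n) ℝ)
    (hBsym : ∀ i, (B i).IsSymm) (hBne : ∀ i, B i ≠ 0)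
    (horth : ∀ i j, i ≠ j → (B i * B j).trace = 0)
    (hspan : ∀ A : Matrix (Fin n) (Fin n) ℝ, A.IsSymm →
      A ∈ Submodule.span ℝ (Set.range B))
    (T : Matrix (Fin n) (Fin n) ℝ →ₗ[ℝ] Matrix (Fin n) (Fin n) ℝ)
    (hTsym : ∀ A : Matrix (Fin n) (Fin n) ℝ, A.IsSymm → (T A).IsSymm)
    (hsa : ∀ A C : Matrix (Fin n) (Fin n) ℝ, A.IsSymm → C.IsSymm →
      (T A * C).trace = (A * T C).trace)
    (P : Set ι) :
    (∀ A ∈ Submodule.span ℝ (B '' P), T A ∈ Submodule.span ℝ (B '' P)) ↔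
      ∀ i ∈ P, ∀ j,
        (SimpleGraph.fromRel fun a b => (B a * T (B b)).trace ≠ 0).Reachable i j →
          j ∈ P :=
  stmt16_general B hBsym hBne horth hspan T hTsym hsa P
end

section
/- Let P be a partition of [n] × [n] with symmetric characteristic matrices B_P, and let S : Sⁿ → Sⁿ be a self-adjoint linear map. Then the span of B_P is an invariant subspace of S if and only if for all X, Y ∈ B_P, the Schur (entrywise) product S(X) ∘ Y is a scalar multiple of Y. -/
/-! The span of the characteristic matrices consists exactly of the matrices that are constant
on every class of the partition, and `M ∘ Y` is a multiple of `Y` for every class matrix `Y`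
precisely when `M` is constant on every class. So both sides say that each `S (charMatrix c i)`
is constant on the classes. -/

open Matrix

/-- The 0/1 characteristic matrix of the class `i` of the partition of `[n] × [n]` given
by the fibers of `c`. -/
def charMatrix {n : ℕ} {ι : Type*} [DecidableEq ι]
    (c : Fin n × Fin n → ι) (i : ι) : Matrix (Fin n) (Fin n) ℝ :=
  Matrix.of fun a b => if c (a, b) = i then (1 : ℝ) else 0

section

variable {n : ℕ} {ι : Type*} [DecidableEq ι] (c : Fin n × Fin n → ι)

theorem mem_span_charMatrix_iff {A : Matrix (Fin n) (Fin n) ℝ} :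
    A ∈ Submodule.span ℝ (Set.range (charMatrix c)) ↔
      ∃ f : ι → ℝ, A = of fun a b => f (c (a, b)) := by
  constructor
  · intro hA
    induction hA using Submodule.span_induction with
    | mem x hx =>
      obtain ⟨i, rfl⟩ := hx
      exact ⟨fun j => if j = i then 1 else 0, rfl⟩
    | zero => exact ⟨0, by ext; rfl⟩
    | add x y _ _ hx hy =>
      obtain ⟨f, rfl⟩ := hx
      obtain ⟨g, rfl⟩ := hy
      exact ⟨f + g, by ext; rfl⟩
    | smul r x _ hx =>
      obtain ⟨f, rfl⟩ := hx
      exact ⟨r • f, by ext; rfl⟩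
  · rintro ⟨f, rfl⟩
    have hsum : (of fun a b => f (c (a, b))) =
        ∑ j ∈ Finset.univ.image c, f j • charMatrix c j := by
      ext a b
      simp [Matrix.sum_apply, charMatrix]
    rw [hsum]
    exact Submodule.sum_mem _ fun j _ =>
      Submodule.smul_mem _ _ (Submodule.subset_span ⟨j, rfl⟩)

theorem forall_exists_hadamard_charMatrix_eq_smul_iff (M : Matrix (Fin n) (Fin n) ℝ) :
    (∀ j, ∃ μ : ℝ, M ⊙ charMatrix c j = μ • charMatrix c j) ↔
      ∃ f : ι → ℝ, M = of fun a b => f (c (a, b)) := by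
  constructor
  · intro h
    choose μ hμ using h
    refine ⟨μ, ?_⟩
    ext a b
    simpa [charMatrix] using congrFun (congrFun (hμ (c (a, b))) a) b
  · rintro ⟨f, rfl⟩ j
    refine ⟨f j, ?_⟩
    ext a b
    by_cases h : c (a, b) = j <;> simp [charMatrix, h]

end

theorem stmt17_general {n : ℕ} {ι : Type*} [DecidableEq ι]
    (c : Fin n × Fin n → ι)
    (S : Matrix (Fin n) (Fin n) ℝ →ₗ[ℝ] Matrix (Fin n) (Fin n) ℝ) :
    (∀ A ∈ Submodule.span ℝ (Set.range (charMatrix c)),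
        S A ∈ Submodule.span ℝ (Set.range (charMatrix c))) ↔
      ∀ i j : ι, ∃ μ : ℝ,
        (Matrix.of fun a b => S (charMatrix c i) a b * charMatrix c j a b) =
          μ • charMatrix c j := by
  have hinvariant := Submodule.span_le (s := Set.range (charMatrix c))
    (p := (Submodule.span ℝ (Set.range (charMatrix c))).comap S)
  rw [Set.range_subset_iff] at hinvariant
  refine hinvariant.trans (forall_congr' fun i => ?_)
  exact (mem_span_charMatrix_iff c).trans
    (forall_exists_hadamard_charMatrix_eq_smul_iff c _).symm

/-- For a partition of `[n] × [n]` with symmetric characteristic matrices and a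
self-adjoint linear map `S` on symmetric matrices, the span of the characteristic
matrices is an invariant subspace of `S` iff for all characteristic matrices `X, Y`, the
Schur product `S(X) ∘ Y` is a scalar multiple of `Y`. -/
theorem stmt17 {n : ℕ} {ι : Type*} [DecidableEq ι]
    (c : Fin n × Fin n → ι)
    (hc : ∀ a b : Fin n, c (a, b) = c (b, a))
    (S : Matrix (Fin n) (Fin n) ℝ →ₗ[ℝ] Matrix (Fin n) (Fin n) ℝ)
    (hsa : ∀ A B : Matrix (Fin n) (Fin n) ℝ, A.IsSymm → B.IsSymm →
      (S A * B).trace = (A * S B).trace) :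
    (∀ A ∈ Submodule.span ℝ (Set.range (charMatrix c)),
        S A ∈ Submodule.span ℝ (Set.range (charMatrix c))) ↔
      ∀ i j : ι, ∃ μ : ℝ,
        (Matrix.of fun a b => S (charMatrix c i) a b * charMatrix c j a b) =
          μ • charMatrix c j :=
  stmt17_general c S
end
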